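/- arXiv:2310.12777 — 3 statements merged into one kernel-verified Lean document; each statement's English description precedes it below -/
import Mathlib

section
/- For every connected graph G on n ≥ 3 vertices, D(G) - π(G) ≤ (3n-5)/4 if n is odd, and D(G) - π(G) ≤ (3n-5)/4 - 1/(4n-4) if n is even, with equality if and only if G is the path P_n. -/
/-!
Let `w₀, …, w_D` be a shortest path between two vertices at distance `D = diam G`, so that
`d(wᵢ, wⱼ) = |i - j|`. For any vertex `v`, the triangle inequality through `v` gives
`d(v, wᵢ) + d(v, w_{D-i}) ≥ |D - 2i|`; summing over `i`, the distances from `v` to the path add up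
to at least `⌊(D+1)²/4⌋`, and to more when `v` is off the path. Counting every other vertex at
distance at least `1` yields `t(v) ≥ ⌊(D+1)²/4⌋ + (n - 1 - D)`, hence
`D - π ≤ D - (⌊(D+1)²/4⌋ + n - 1 - D)/(n - 1)`. The right-hand side is strictly increasing in
`D ≤ n - 1`, with value `n - 1 - ⌊n²/4⌋/(n - 1)` at `D = n - 1`, which is the claimed bound for
either parity of `n`. So equality forces `D = n - 1`, i.e. a geodesic through all vertices, which
makes `G` a path; on the path the middle vertex has transmission exactly `⌊n²/4⌋`.
-/

open SimpleGraph Finset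

/-- The transmission of a vertex: the sum of distances from `v` to all other vertices. -/
noncomputable def transmission {n : ℕ} (G : SimpleGraph (Fin n)) (v : Fin n) : ℕ :=
  ∑ u, G.dist v u

/-- The proximity: the minimum average distance from a vertex to all others. -/
noncomputable def proximity {n : ℕ} (G : SimpleGraph (Fin n)) : ℝ :=
  sInf {x : ℝ | ∃ v : Fin n, x = transmission G v} / (n - 1)

/-- The remoteness: the maximum average distance from a vertex to all others. -/
noncomputable def remoteness {n : ℕ} (G : SimpleGraph (Fin n)) : ℝ :=
  sSup {x : ℝ | ∃ v : Fin n, x = transmission G v} / (n - 1)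

/-- The diameter of a graph: the maximum distance between two vertices. -/
noncomputable def graphDiam {n : ℕ} (G : SimpleGraph (Fin n)) : ℕ :=
  Finset.univ.sup fun p : Fin n × Fin n => G.dist p.1 p.2

namespace Nat

theorem sum_range_dist_div_two (D : ℕ) :
    ∑ i ∈ range (D + 1), Nat.dist i (D / 2) = (D + 1) ^ 2 / 4 := by
  induction D using Nat.twoStepInduction with
  | zero => simp
  | one => decide
  | more D ih _ =>
    rw [sum_range_succ', sum_range_succ, show (D + 2) / 2 = D / 2 + 1 by omega]
    simp only [Nat.dist_succ_succ, ih]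
    have : (D + 2 + 1) ^ 2 = (D + 1) ^ 2 + 4 * (D + 2) := by ring
    unfold Nat.dist
    omega

theorem sq_le_four_mul_sq_div_four_add_one (k : ℕ) : k ^ 2 ≤ 4 * (k ^ 2 / 4) + 1 := by
  rcases Nat.even_or_odd' k with ⟨m, rfl | rfl⟩
  · rw [show (2 * m) ^ 2 = 4 * m ^ 2 by ring]; omega
  · rw [show (2 * m + 1) ^ 2 = 4 * (m ^ 2 + m) + 1 by ring]; omega

theorem mul_add_sq_div_four_lt {k n : ℕ} (hk : k < n) :
    k * n + n ^ 2 / 4 < n * n + k ^ 2 / 4 := by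
  have h1 := Nat.div_mul_le_self (n ^ 2) 4
  have h2 := sq_le_four_mul_sq_div_four_add_one k
  nlinarith

end Nat

theorem Finset.sum_range_add_reflect {M : Type*} [AddCommMonoid M] (f : ℕ → M) (D : ℕ) :
    ∑ i ∈ range (D + 1), (f i + f (D - i)) = 2 • ∑ i ∈ range (D + 1), f i := by
  rw [sum_add_distrib, two_nsmul, ← sum_range_reflect f (D + 1)]
  simp

theorem sub_div_lt_sub_one_sub_sq_div_four_div {n D : ℕ} (hD : D < n - 1) :
    (D : ℝ) - ((D + 1) ^ 2 / 4 + (n - 1 - D) : ℕ) / (n - 1) <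
      n - 1 - (n ^ 2 / 4 : ℕ) / (n - 1) := by
  have hN : (0 : ℝ) < n - 1 := by
    rw [sub_pos]; exact_mod_cast (by omega : 1 < n)
  have hnum : (((D + 1) * n + n ^ 2 / 4 : ℕ) : ℝ) < (n * n + (D + 1) ^ 2 / 4 : ℕ) :=
    mod_cast Nat.mul_add_sq_div_four_lt (by omega : D + 1 < n)
  rw [← sub_pos]
  have : (n - 1 - (n ^ 2 / 4 : ℕ) / (n - 1) : ℝ) -
      (D - ((D + 1) ^ 2 / 4 + (n - 1 - D) : ℕ) / (n - 1)) =
      (((n * n + (D + 1) ^ 2 / 4 : ℕ) : ℝ) - (((D + 1) * n + n ^ 2 / 4 : ℕ) : ℝ)) / (n - 1) := by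
    push_cast [Nat.cast_sub (show D ≤ n - 1 by omega), Nat.cast_sub (show 1 ≤ n by omega)]
    field_simp
    ring
  rw [this]
  exact div_pos (by linarith) hN

theorem sub_one_sub_sq_div_four_div_of_odd {n : ℕ} (hn : Odd n) (h1 : 1 < n) :
    (n - 1 : ℝ) - (n ^ 2 / 4 : ℕ) / (n - 1) = (3 * n - 5) / 4 := by
  have hN : (n : ℝ) - 1 ≠ 0 := sub_ne_zero.mpr (mod_cast h1.ne')
  have hq : ((n ^ 2 / 4 : ℕ) : ℝ) = (n ^ 2 - 1) / 4 := by
    obtain ⟨m, rfl⟩ := hn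
    rw [show (2 * m + 1) ^ 2 / 4 = m * m + m by
      rw [show (2 * m + 1) ^ 2 = 4 * (m * m + m) + 1 by ring]; omega]
    push_cast
    ring
  rw [hq]
  field_simp
  ring

theorem sub_one_sub_sq_div_four_div_of_even {n : ℕ} (hn : Even n) :
    (n - 1 : ℝ) - (n ^ 2 / 4 : ℕ) / (n - 1) = (3 * n - 5) / 4 - 1 / (4 * n - 4) := by
  have hN : (n : ℝ) - 1 ≠ 0 := sub_ne_zero.mpr (mod_cast fun h => Nat.not_even_one (h ▸ hn))
  have hq : ((n ^ 2 / 4 : ℕ) : ℝ) = n ^ 2 / 4 := by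
    obtain ⟨m, rfl⟩ := hn
    rw [show (m + m) ^ 2 / 4 = m * m by
      rw [show (m + m) ^ 2 = 4 * (m * m) by ring]; omega]
    push_cast
    ring
  rw [hq, show (4 * n - 4 : ℝ) = 4 * (n - 1) by ring]
  field_simp
  ring

namespace SimpleGraph

theorem pathGraph_dist_le_length {n : ℕ} {u v : Fin n} (p : (pathGraph n).Walk u v) :
    Nat.dist u v ≤ p.length := by
  induction p with
  | nil => simp
  | cons h _ ih =>
    rw [pathGraph_adj] at h
    rw [Walk.length_cons]
    unfold Nat.dist at *
    omega

namespace Walk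

variable {V : Type*} {G : SimpleGraph V} {a b : V}

theorem dist_getVert_getVert_of_length_eq_dist {p : G.Walk a b} (hp : p.length = G.dist a b)
    {i j : ℕ} (hi : i ≤ p.length) (hj : j ≤ p.length) :
    G.dist (p.getVert i) (p.getVert j) = Nat.dist i j := by
  wlog hij : i ≤ j generalizing i j
  · rw [dist_comm, Nat.dist_comm, this hj hi (by omega)]
  have hsub := ((p.drop i).isSubwalk_take (j - i)).trans (p.isSubwalk_drop i)
  have h := length_eq_dist_of_subwalk hp hsub
  rw [take_length, drop_length, drop_getVert, show i + (j - i) = j by omega] at h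
  rw [← h, Nat.dist_eq_sub_of_le hij]
  omega

theorem IsPath.injOn_getVert_range {p : G.Walk a b} (hp : p.IsPath) :
    Set.InjOn p.getVert (range (p.length + 1)) :=
  hp.getVert_injOn.mono fun i hi => by simpa [Nat.lt_succ_iff] using hi

theorem dist_add_dist_getVert_reflect {p : G.Walk a b} (hG : G.Connected)
    (hp : p.length = G.dist a b) (v : V) {i : ℕ} (hi : i ≤ p.length) :
    Nat.dist i (p.length / 2) + Nat.dist (p.length - i) (p.length / 2) ≤
      G.dist v (p.getVert i) + G.dist v (p.getVert (p.length - i)) := by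
  have hpair : Nat.dist i (p.length / 2) + Nat.dist (p.length - i) (p.length / 2) =
      Nat.dist i (p.length - i) := by
    unfold Nat.dist; omega
  rw [hpair, ← dist_getVert_getVert_of_length_eq_dist hp hi (Nat.sub_le _ _),
    G.dist_comm (u := v)]
  exact hG.dist_triangle

theorem sq_div_four_le_sum_dist_getVert {p : G.Walk a b} (hG : G.Connected)
    (hp : p.length = G.dist a b) (v : V) :
    (p.length + 1) ^ 2 / 4 ≤ ∑ i ∈ range (p.length + 1), G.dist v (p.getVert i) := by
  suffices 2 * ((p.length + 1) ^ 2 / 4) ≤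
      2 * ∑ i ∈ range (p.length + 1), G.dist v (p.getVert i) by omega
  rw [← Nat.sum_range_dist_div_two, ← smul_eq_mul, ← smul_eq_mul,
    ← sum_range_add_reflect, ← sum_range_add_reflect]
  refine sum_le_sum fun i hi => dist_add_dist_getVert_reflect hG hp v ?_
  simpa [Nat.lt_succ_iff] using hi

theorem sq_div_four_lt_sum_dist_getVert {p : G.Walk a b} (hG : G.Connected)
    (hp : p.length = G.dist a b) {v : V} (hv : v ∉ p.support) :
    (p.length + 1) ^ 2 / 4 < ∑ i ∈ range (p.length + 1), G.dist v (p.getVert i) := by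
  have hpos : ∀ i, 1 ≤ G.dist v (p.getVert i) := fun i =>
    hG.pos_dist_of_ne fun h => hv (h ▸ p.getVert_mem_support i)
  suffices 2 * ((p.length + 1) ^ 2 / 4) <
      2 * ∑ i ∈ range (p.length + 1), G.dist v (p.getVert i) by omega
  rw [← Nat.sum_range_dist_div_two, ← smul_eq_mul, ← smul_eq_mul,
    ← sum_range_add_reflect, ← sum_range_add_reflect]
  -- at the middle index the left-hand side is at most `1`, the right-hand side at least `2`
  refine sum_lt_sum (fun i hi => dist_add_dist_getVert_reflect hG hp v ?_)
    ⟨p.length / 2, by simp; omega, ?_⟩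
  · simpa [Nat.lt_succ_iff] using hi
  · have := hpos (p.length / 2)
    have := hpos (p.length - p.length / 2)
    unfold Nat.dist
    omega

theorem card_erase_le_sum_dist [DecidableEq V] (hG : G.Connected) (s : Finset V) (v : V) :
    #(s.erase v) ≤ ∑ u ∈ s, G.dist v u :=
  calc #(s.erase v) = ∑ _u ∈ s.erase v, 1 := card_eq_sum_ones _
    _ ≤ ∑ u ∈ s.erase v, G.dist v u :=
      sum_le_sum fun _u hu => hG.pos_dist_of_ne (ne_of_mem_erase hu).symm
    _ ≤ ∑ u ∈ s, G.dist v u := sum_le_sum_of_subset (erase_subset _ _)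

variable [Fintype V]

theorem sq_div_four_add_le_sum_dist {p : G.Walk a b} (hG : G.Connected)
    (hp : p.length = G.dist a b) (v : V) :
    (p.length + 1) ^ 2 / 4 + (Fintype.card V - 1 - p.length) ≤ ∑ u, G.dist v u := by
  classical
  set P := (range (p.length + 1)).image p.getVert
  have hinj := (p.isPath_of_length_eq_dist hp).injOn_getVert_range
  have hcard : #(univ \ P) = Fintype.card V - (p.length + 1) := by
    rw [card_sdiff_of_subset (subset_univ P), card_image_of_injOn hinj, card_range, card_univ]
  have hmem : v ∈ P ↔ v ∈ p.support := by
    simp only [P, mem_image, mem_range, Nat.lt_succ_iff, mem_support_iff_exists_getVert]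
    exact ⟨fun ⟨i, hi, h⟩ => ⟨i, h, hi⟩, fun ⟨i, h, hi⟩ => ⟨i, hi, h⟩⟩
  have hout := card_erase_le_sum_dist hG (univ \ P) v
  rw [← sum_sdiff (subset_univ P), sum_image hinj]
  by_cases hv : v ∈ p.support
  · have := sq_div_four_le_sum_dist_getVert hG hp v
    have hvP : v ∉ univ \ P := by simp [hmem, hv]
    rw [erase_eq_of_notMem hvP, hcard] at hout
    omega
  · have := sq_div_four_lt_sum_dist_getVert hG hp hv
    have := pred_card_le_card_erase (s := univ \ P) (a := v)
    omega

theorem sum_dist_getVert_half_of_length_eq {p : G.Walk a b} (hp : p.length = G.dist a b)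
    (hlen : p.length + 1 = Fintype.card V) :
    ∑ u, G.dist (p.getVert (p.length / 2)) u = (p.length + 1) ^ 2 / 4 := by
  classical
  have hinj := (p.isPath_of_length_eq_dist hp).injOn_getVert_range
  have huniv : (range (p.length + 1)).image p.getVert = univ :=
    eq_univ_of_card _ (by rw [card_image_of_injOn hinj, card_range, hlen])
  rw [← huniv, sum_image hinj, ← Nat.sum_range_dist_div_two]
  refine sum_congr rfl fun i hi => ?_
  rw [dist_getVert_getVert_of_length_eq_dist hp (Nat.div_le_self _ _)
    (by simpa [Nat.lt_succ_iff] using hi), Nat.dist_comm]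

theorem nonempty_iso_pathGraph_of_length_eq {p : G.Walk a b} (hp : p.length = G.dist a b)
    (hlen : p.length + 1 = Fintype.card V) : Nonempty (G ≃g pathGraph (Fintype.card V)) := by
  have hinj : Function.Injective fun i : Fin (Fintype.card V) => p.getVert i := fun i j h =>
    Fin.ext <| (p.isPath_of_length_eq_dist hp).getVert_injOn
      (by simp only [Set.mem_ofPred_eq]; omega) (by simp only [Set.mem_ofPred_eq]; omega) h
  let e := Equiv.ofBijective _ ((Fintype.bijective_iff_injective_and_card _).mpr ⟨hinj, by simp⟩)
  refine ⟨Iso.symm ⟨e, fun {i j} => ?_⟩⟩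
  rw [pathGraph_adj, ← dist_eq_one_iff_adj]
  simp only [e, Equiv.ofBijective_apply]
  rw [dist_getVert_getVert_of_length_eq_dist hp (by omega) (by omega)]
  unfold Nat.dist
  omega

end Walk

end SimpleGraph

section FinGraph

variable {n : ℕ} {G : SimpleGraph (Fin n)}

theorem proximity_le (v : Fin n) : proximity G ≤ transmission G v / (n - 1) := by
  have hn : (1 : ℝ) ≤ n := by exact_mod_cast v.pos
  refine div_le_div_of_nonneg_right (csInf_le ⟨0, ?_⟩ ⟨v, rfl⟩) (by linarith)
  rintro _ ⟨u, rfl⟩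
  positivity

theorem le_proximity [NeZero n] {m : ℕ} (h : ∀ v, m ≤ transmission G v) :
    m / (n - 1 : ℝ) ≤ proximity G := by
  have hn : (1 : ℝ) ≤ n := mod_cast NeZero.one_le
  refine div_le_div_of_nonneg_right (le_csInf ⟨_, 0, rfl⟩ ?_) (by linarith)
  rintro _ ⟨v, rfl⟩
  exact_mod_cast h v

theorem dist_le_graphDiam (u v : Fin n) : G.dist u v ≤ graphDiam G :=
  le_sup (f := fun p : Fin n × Fin n => G.dist p.1 p.2) (mem_univ (u, v))

theorem exists_dist_eq_graphDiam [NeZero n] : ∃ u v, G.dist u v = graphDiam G := by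
  obtain ⟨⟨u, v⟩, -, h⟩ := exists_mem_eq_sup (univ : Finset (Fin n × Fin n)) univ_nonempty
    fun p => G.dist p.1 p.2
  exact ⟨u, v, h.symm⟩

theorem graphDiam_le_sub_one (hG : G.Connected) : graphDiam G ≤ n - 1 :=
  Finset.sup_le fun uv _ => by
    obtain ⟨p, hp⟩ := hG.exists_walk_length_eq_dist uv.1 uv.2
    have := (p.isPath_of_length_eq_dist hp).length_lt
    rw [Fintype.card_fin] at this
    omega

theorem graphDiam_eq_sub_one_iff [NeZero n] (hG : G.Connected) :
    graphDiam G = n - 1 ↔ Nonempty (G ≃g pathGraph n) := by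
  constructor
  · intro hD
    obtain ⟨u, v, huv⟩ := exists_dist_eq_graphDiam (G := G)
    obtain ⟨p, hp⟩ := hG.exists_walk_length_eq_dist u v
    have := p.nonempty_iso_pathGraph_of_length_eq hp
      (by rw [Fintype.card_fin, hp, huv, hD, Nat.sub_add_cancel NeZero.one_le])
    rwa [Fintype.card_fin] at this
  · rintro ⟨φ⟩
    refine (graphDiam_le_sub_one hG).antisymm ?_
    let last : Fin n := ⟨n - 1, Nat.sub_one_lt (NeZero.ne n)⟩
    obtain ⟨p, hp⟩ := hG.exists_walk_length_eq_dist (φ.symm 0) (φ.symm last)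
    have h := pathGraph_dist_le_length (p.map φ.toHom)
    rw [Walk.length_map, hp, show φ.toHom (φ.symm 0) = 0 from φ.apply_symm_apply 0,
      show φ.toHom (φ.symm last) = last from φ.apply_symm_apply last] at h
    calc n - 1 = Nat.dist (0 : Fin n) last := by simp [last, Nat.dist_zero_left]
      _ ≤ _ := h.trans (dist_le_graphDiam _ _)

theorem sq_div_four_add_div_le_proximity [NeZero n] (hG : G.Connected) :
    (((graphDiam G + 1) ^ 2 / 4 + (n - 1 - graphDiam G) : ℕ) : ℝ) / (n - 1) ≤ proximity G := by
  obtain ⟨a, b, hab⟩ := exists_dist_eq_graphDiam (G := G)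
  obtain ⟨p, hp⟩ := hG.exists_walk_length_eq_dist a b
  refine le_proximity fun v => ?_
  have := p.sq_div_four_add_le_sum_dist hG hp v
  rwa [hp, hab, Fintype.card_fin] at this

theorem proximity_le_of_graphDiam_eq [NeZero n] (hG : G.Connected) (hD : graphDiam G = n - 1) :
    proximity G ≤ (n ^ 2 / 4 : ℕ) / (n - 1 : ℝ) := by
  obtain ⟨a, b, hab⟩ := exists_dist_eq_graphDiam (G := G)
  obtain ⟨p, hp⟩ := hG.exists_walk_length_eq_dist a b
  have hlen : p.length + 1 = n := by rw [hp, hab, hD, Nat.sub_add_cancel NeZero.one_le]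
  have := p.sum_dist_getVert_half_of_length_eq hp (by rw [hlen, Fintype.card_fin])
  rw [hlen] at this
  exact this ▸ proximity_le _

theorem graphDiam_sub_proximity_le [NeZero n] (hG : G.Connected) :
    (graphDiam G : ℝ) - proximity G ≤ n - 1 - (n ^ 2 / 4 : ℕ) / (n - 1) := by
  have hπ := sq_div_four_add_div_le_proximity hG
  rcases (graphDiam_le_sub_one hG).lt_or_eq with hD | hD
  · linarith [sub_div_lt_sub_one_sub_sq_div_four_div hD]
  · rw [hD, Nat.sub_add_cancel NeZero.one_le, Nat.sub_self, add_zero] at hπ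
    rw [hD, Nat.cast_sub NeZero.one_le]
    push_cast
    linarith

theorem graphDiam_sub_proximity_eq_iff [NeZero n] (hG : G.Connected) :
    (graphDiam G : ℝ) - proximity G = n - 1 - (n ^ 2 / 4 : ℕ) / (n - 1) ↔
      Nonempty (G ≃g pathGraph n) := by
  rw [← graphDiam_eq_sub_one_iff hG]
  refine ⟨fun heq => ?_, fun hD => ?_⟩
  · by_contra hD
    have := sub_div_lt_sub_one_sub_sq_div_four_div ((graphDiam_le_sub_one hG).lt_of_ne hD)
    linarith [sq_div_four_add_div_le_proximity hG]
  · exact (graphDiam_sub_proximity_le hG).antisymm (by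
      have := proximity_le_of_graphDiam_eq hG hD
      rw [hD, Nat.cast_sub NeZero.one_le]
      push_cast
      linarith)

end FinGraph

theorem diam_sub_proximity {n : ℕ} (hn : 3 ≤ n) (G : SimpleGraph (Fin n))
    (hG : G.Connected) :
    (Odd n → (graphDiam G : ℝ) - proximity G ≤ (3 * n - 5) / 4 ∧
      ((graphDiam G : ℝ) - proximity G = (3 * n - 5) / 4 ↔
        Nonempty (G ≃g SimpleGraph.pathGraph n))) ∧
    (Even n → (graphDiam G : ℝ) - proximity G ≤ (3 * n - 5) / 4 - 1 / (4 * n - 4) ∧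
      ((graphDiam G : ℝ) - proximity G = (3 * n - 5) / 4 - 1 / (4 * n - 4) ↔
        Nonempty (G ≃g SimpleGraph.pathGraph n))) := by
  have : NeZero n := ⟨by omega⟩
  refine ⟨fun hodd => ?_, fun heven => ?_⟩
  · rw [← sub_one_sub_sq_div_four_div_of_odd hodd (by omega)]
    exact ⟨graphDiam_sub_proximity_le hG, graphDiam_sub_proximity_eq_iff hG⟩
  · rw [← sub_one_sub_sq_div_four_div_of_even heven]
    exact ⟨graphDiam_sub_proximity_le hG, graphDiam_sub_proximity_eq_iff hG⟩
end

section
/- For every connected graph G on n ≥ 3 vertices, D(G) - ρ(G) ≤ (n-2)/2, with equality if and only if G is the path P_n. -/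
open SimpleGraph Finset

-- getVert lemmas
lemma dist_getVert_le {V : Type*} {G : SimpleGraph V} (hG : G.Connected)
    {u v : V} (p : G.Walk u v) (k : ℕ) : G.dist u (p.getVert k) ≤ k := by
  induction p generalizing k with
  | nil => simp [SimpleGraph.Walk.getVert, SimpleGraph.dist_self]
  | @cons a b c h q ih =>
    cases k with
    | zero => simp [SimpleGraph.Walk.getVert]
    | succ k =>
      rw [SimpleGraph.Walk.getVert_cons_succ]
      calc G.dist a (q.getVert k) ≤ G.dist a b + G.dist b (q.getVert k) :=
            hG.dist_triangle
        _ ≤ 1 + k := by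
            have h1 : G.dist a b ≤ 1 := by
              have := SimpleGraph.dist_le h.toWalk
              simpa using this
            exact Nat.add_le_add h1 (ih k)
        _ = k + 1 := by omega

lemma dist_getVert_eq {V : Type*} {G : SimpleGraph V} (hG : G.Connected)
    {u v : V} (p : G.Walk u v) (hp : p.length = G.dist u v) {k : ℕ}
    (hk : k ≤ p.length) : G.dist u (p.getVert k) = k := by
  have h1 : G.dist u (p.getVert k) ≤ k := dist_getVert_le hG p k
  have h2 : G.dist (p.getVert k) v ≤ p.length - k := by
    have := dist_getVert_le hG p.reverse (p.length - k)
    rw [SimpleGraph.Walk.getVert_reverse] at this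
    have hk' : p.length - (p.length - k) = k := by omega
    rw [hk'] at this
    rwa [SimpleGraph.dist_comm] at this
  have h3 : G.dist u v ≤ G.dist u (p.getVert k) + G.dist (p.getVert k) v :=
    hG.dist_triangle
  omega

lemma transmission_lower {n : ℕ} {G : SimpleGraph (Fin n)} (hG : G.Connected)
    (u v : Fin n) :
    G.dist u v * (G.dist u v + 1) + 2 * (n - 1 - G.dist u v) ≤ 2 * transmission G u := by
  classical
  set d := G.dist u v with hd
  obtain ⟨p, hp⟩ := hG.exists_walk_length_eq_dist u v
  have hdist : ∀ k ≤ d, G.dist u (p.getVert k) = k := by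
    intro k hk
    exact dist_getVert_eq hG p hp (by omega)
  set S : Finset (Fin n) := (Finset.range (d + 1)).image p.getVert with hS
  have hinj : Set.InjOn p.getVert (Finset.range (d + 1)) := by
    intro a ha b hb hab
    simp only [Finset.coe_range, Set.mem_Iio] at ha hb
    have := hdist a (by omega)
    rw [hab, hdist b (by omega)] at this
    omega
  have hcard : S.card = d + 1 := by
    rw [hS, Finset.card_image_of_injOn hinj, Finset.card_range]
  have hdn : d + 1 ≤ n := by
    have := Finset.card_le_card (Finset.subset_univ S)
    simpa [hcard] using this
  have hsplit : ∑ w ∈ Finset.univ \ S, G.dist u w + ∑ w ∈ S, G.dist u w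
      = transmission G u := by
    rw [transmission]
    exact Finset.sum_sdiff (Finset.subset_univ S)
  have hsum1 : ∑ w ∈ S, G.dist u w = ∑ k ∈ Finset.range (d + 1), k := by
    rw [hS, Finset.sum_image hinj]
    exact Finset.sum_congr rfl fun k hk => hdist k (by simpa using Nat.lt_succ_iff.mp (Finset.mem_range.mp hk))
  have hgauss : 2 * ∑ k ∈ Finset.range (d + 1), k = d * (d + 1) := by
    rw [mul_comm]
    rw [Finset.sum_range_id_mul_two (d + 1)]
    simp [Nat.mul_comm]
  have hrest : n - (d + 1) ≤ ∑ w ∈ Finset.univ \ S, G.dist u w := by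
    have hcard' : (Finset.univ \ S).card = n - (d + 1) := by
      rw [Finset.card_sdiff_of_subset (Finset.subset_univ S), hcard, Finset.card_univ, Fintype.card_fin]
    have hone : ∀ w ∈ Finset.univ \ S, 1 ≤ G.dist u w := by
      intro w hw
      rcases Finset.mem_sdiff.mp hw with ⟨-, hwS⟩
      by_contra hlt
      have h0 : G.dist u w = 0 := by omega
      have : u = w := (hG.dist_eq_zero_iff).mp h0
      apply hwS
      rw [hS]
      refine Finset.mem_image.mpr ⟨0, by simp, ?_⟩
      rw [SimpleGraph.Walk.getVert_zero, this]
    calc n - (d + 1) = (Finset.univ \ S).card • 1 := by simp [hcard']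
      _ ≤ ∑ w ∈ Finset.univ \ S, G.dist u w := Finset.card_nsmul_le_sum _ _ _ hone
  omega

-- path graph walks
lemma pg_walk_exists {n : ℕ} : ∀ (d : ℕ) (i j : Fin n), i.val + d = j.val →
    ∃ p : (SimpleGraph.pathGraph n).Walk i j, p.length = d := by
  intro d
  induction d with
  | zero =>
    intro i j h
    have : i = j := Fin.ext (by omega)
    subst this
    exact ⟨SimpleGraph.Walk.nil, rfl⟩
  | succ d ih =>
    intro i j h
    have hub : i.val + 1 < n := by omega
    set i' : Fin n := ⟨i.val + 1, by omega⟩ with hi'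
    have hadj : (SimpleGraph.pathGraph n).Adj i i' :=
      SimpleGraph.pathGraph_adj.mpr (Or.inl rfl)
    obtain ⟨q, hq⟩ := ih i' j (by simp [hi']; omega)
    exact ⟨SimpleGraph.Walk.cons hadj q, by simp [hq]⟩

lemma pg_walk_lb {n : ℕ} : ∀ {i j : Fin n} (p : (SimpleGraph.pathGraph n).Walk i j),
    (i.val - j.val) + (j.val - i.val) ≤ p.length := by
  intro i j p
  induction p with
  | nil => simp
  | @cons a b c h q ih =>
    have hab := SimpleGraph.pathGraph_adj.mp h
    simp only [SimpleGraph.Walk.length_cons]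
    omega

lemma pg_dist_eq {n : ℕ} (hn : 1 ≤ n) (i j : Fin n) :
    (SimpleGraph.pathGraph n).dist i j = (i.val - j.val) + (j.val - i.val) := by
  obtain ⟨m, rfl⟩ := Nat.exists_eq_add_of_le hn
  have hconn : (SimpleGraph.pathGraph (1 + m)).Connected := by
    rw [Nat.add_comm]
    exact SimpleGraph.pathGraph_connected m
  refine le_antisymm ?_ ?_
  · rcases le_or_gt i.val j.val with hij | hij
    · obtain ⟨p, hp⟩ := pg_walk_exists (j.val - i.val) i j (by omega)
      have := SimpleGraph.dist_le p
      omega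
    · obtain ⟨p, hp⟩ := pg_walk_exists (i.val - j.val) j i (by omega)
      have := SimpleGraph.dist_le p.reverse
      rw [SimpleGraph.Walk.length_reverse] at this
      omega
  · obtain ⟨p, hp⟩ := hconn.exists_walk_length_eq_dist i j
    have := pg_walk_lb p
    omega

lemma pg_trans_le {n : ℕ} (hn : 1 ≤ n) (a : Fin n) :
    2 * ∑ w, (SimpleGraph.pathGraph n).dist a w ≤ n * (n - 1) := by
  have hrev : ∑ w, (SimpleGraph.pathGraph n).dist a w
      = ∑ w, (SimpleGraph.pathGraph n).dist a (Fin.rev w) :=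
    (Fintype.sum_equiv (Fin.revPerm) _ _ (fun w => rfl)).symm
  have : 2 * ∑ w, (SimpleGraph.pathGraph n).dist a w
      = ∑ w : Fin n, ((SimpleGraph.pathGraph n).dist a w
          + (SimpleGraph.pathGraph n).dist a (Fin.rev w)) := by
    rw [Finset.sum_add_distrib, ← hrev]; ring
  rw [this]
  calc ∑ w : Fin n, ((SimpleGraph.pathGraph n).dist a w
          + (SimpleGraph.pathGraph n).dist a (Fin.rev w))
      ≤ ∑ _w : Fin n, (n - 1) := by
        refine Finset.sum_le_sum fun w _ => ?_
        rw [pg_dist_eq hn, pg_dist_eq hn]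
        have h1 := a.isLt
        have h2 := w.isLt
        have h3 : (Fin.rev w).val = n - 1 - w.val := by
          rw [Fin.val_rev]; omega
        omega
    _ = n * (n - 1) := by simp [Finset.sum_const, mul_comm]

lemma pg_trans_zero {n : ℕ} (hn : 1 ≤ n) (h0 : 0 < n) :
    2 * ∑ w, (SimpleGraph.pathGraph n).dist ⟨0, h0⟩ w = n * (n - 1) := by
  have : ∀ w : Fin n, (SimpleGraph.pathGraph n).dist ⟨0, h0⟩ w = w.val := by
    intro w; rw [pg_dist_eq hn]; simp
  simp only [this]
  have := Finset.sum_range_id_mul_two n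
  rw [← Fin.sum_univ_eq_sum_range (fun i => i) n] at this
  omega

-- iso transfers dist
lemma iso_dist_le {V W : Type*} {G : SimpleGraph V} {H : SimpleGraph W}
    (e : G ≃g H) {u v : V} (h : G.Reachable u v) :
    H.dist (e u) (e v) ≤ G.dist u v := by
  obtain ⟨p, hp⟩ := h.exists_walk_length_eq_dist
  have := SimpleGraph.dist_le (p.map e.toHom)
  rwa [SimpleGraph.Walk.length_map, hp] at this

lemma iso_dist_eq {V W : Type*} {G : SimpleGraph V} {H : SimpleGraph W}
    (e : G ≃g H) (hG : G.Connected) (u v : V) :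
    H.dist (e u) (e v) = G.dist u v := by
  refine le_antisymm (iso_dist_le e (hG u v)) ?_
  have hreach : H.Reachable (e u) (e v) := by
    obtain ⟨p⟩ := hG u v
    exact ⟨(p.map e.toHom)⟩
  have := iso_dist_le e.symm hreach
  simpa using this

lemma dist_le_pred {n : ℕ} {G : SimpleGraph (Fin n)} (hG : G.Connected)
    (u v : Fin n) : G.dist u v ≤ n - 1 := by
  obtain ⟨p, hp⟩ := hG.exists_walk_length_eq_dist u v
  have h1 := SimpleGraph.dist_le p.bypass
  have h2 := p.bypass_isPath.length_lt
  simp only [Fintype.card_fin] at h2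
  omega

lemma iso_of_dist {n : ℕ} {G : SimpleGraph (Fin n)} (hG : G.Connected)
    (hn : 3 ≤ n) {u v : Fin n} (h : G.dist u v = n - 1) :
    Nonempty (G ≃g SimpleGraph.pathGraph n) := by
  obtain ⟨p, hp⟩ := hG.exists_walk_length_eq_dist u v
  have hlen : p.length = n - 1 := by omega
  set F : Fin n → Fin n := fun k => p.getVert k.val with hF
  have hdist : ∀ k : Fin n, G.dist u (F k) = k.val := by
    intro k
    exact dist_getVert_eq hG p hp (by omega)
  have hinj : Function.Injective F := by
    intro a b hab
    have ha := hdist a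
    rw [hab, hdist b] at ha
    exact Fin.ext ha.symm
  have hbij : Function.Bijective F := Finite.injective_iff_bijective.mp hinj
  have hadj : ∀ i j : Fin n, (SimpleGraph.pathGraph n).Adj i j ↔ G.Adj (F i) (F j) := by
    intro i j
    constructor
    · intro hij
      rcases SimpleGraph.pathGraph_adj.mp hij with h1 | h1
      · have hlt : i.val < p.length := by omega
        have := p.adj_getVert_succ hlt
        have hFj : F j = p.getVert (i.val + 1) := by
          rw [hF]; simp only []; congr 1; omega
        rw [hF]; simp only []; rw [show (j:ℕ) = i.val + 1 by omega] at *
        exact this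
      · have hlt : j.val < p.length := by omega
        have := p.adj_getVert_succ hlt
        have : G.Adj (p.getVert j.val) (p.getVert (j.val + 1)) := this
        rw [hF]; simp only []
        rw [show (i:ℕ) = j.val + 1 by omega]
        exact this.symm
    · intro hij
      have hne : i ≠ j := by
        intro hc; subst hc; exact hij.ne rfl
      have h1 : G.dist (F i) (F j) ≤ 1 := by
        have := SimpleGraph.dist_le hij.toWalk
        simpa using this
      have h2 : G.dist (F j) (F i) ≤ 1 := by
        rwa [SimpleGraph.dist_comm] at h1
      have t1 : G.dist u (F j) ≤ G.dist u (F i) + G.dist (F i) (F j) :=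
        hG.dist_triangle
      have t2 : G.dist u (F i) ≤ G.dist u (F j) + G.dist (F j) (F i) :=
        hG.dist_triangle
      rw [hdist i, hdist j] at t1 t2
      have hvne : i.val ≠ j.val := fun hc => hne (Fin.ext hc)
      exact SimpleGraph.pathGraph_adj.mpr (by omega)
  let e : Fin n ≃ Fin n := Equiv.ofBijective F hbij
  refine ⟨(RelIso.mk e ?_ : SimpleGraph.pathGraph n ≃g G).symm⟩
  intro i j
  exact (hadj i j).symm

theorem diam_sub_remoteness {n : ℕ} (hn : 3 ≤ n) (G : SimpleGraph (Fin n))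
    (hG : G.Connected) :
    (graphDiam G : ℝ) - remoteness G ≤ (n - 2) / 2 ∧
      ((graphDiam G : ℝ) - remoteness G = (n - 2) / 2 ↔
        Nonempty (G ≃g SimpleGraph.pathGraph n)) := by
  classical
  have hn0 : 0 < n := by omega
  haveI : Nonempty (Fin n) := ⟨⟨0, hn0⟩⟩
  set S : Set ℝ := {x : ℝ | ∃ v : Fin n, x = transmission G v} with hSdef
  have hSrange : S = Set.range (fun v : Fin n => (transmission G v : ℝ)) := by
    ext x; simp [hSdef, eq_comm]
  have hSne : S.Nonempty := ⟨(transmission G ⟨0, hn0⟩ : ℝ), ⟨⟨0, hn0⟩, rfl⟩⟩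
  have hbdd : BddAbove S := by
    rw [hSrange]; exact (Set.finite_range _).bddAbove
  have hmem : ∀ v : Fin n, (transmission G v : ℝ) ∈ S := fun v => ⟨v, rfl⟩
  have hm2 : (2 : ℝ) ≤ (n : ℝ) - 1 := by
    have : (3 : ℝ) ≤ (n : ℝ) := by exact_mod_cast hn
    linarith
  have hm0 : (0 : ℝ) < (n : ℝ) - 1 := by linarith
  have hn1 : 1 ≤ n := by omega
  have hcast : ((n - 1 : ℕ) : ℝ) = (n : ℝ) - 1 := by
    push_cast [hn1]; ring
  -- diametral pair
  obtain ⟨pr, -, hdiam⟩ := Finset.exists_mem_eq_sup (Finset.univ : Finset (Fin n × Fin n))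
    (Finset.univ_nonempty) (fun p : Fin n × Fin n => G.dist p.1 p.2)
  set u := pr.1
  set v := pr.2
  have hdv : graphDiam G = G.dist u v := hdiam
  have hdle : graphDiam G ≤ n - 1 := by rw [hdv]; exact dist_le_pred hG u v
  have ht : graphDiam G * (graphDiam G + 1) + 2 * (n - 1 - graphDiam G)
      ≤ 2 * transmission G u := by
    rw [hdv]; exact transmission_lower hG u v
  have htR : (graphDiam G : ℝ) * (graphDiam G + 1) + 2 * ((n : ℝ) - 1) ≤
      2 * (transmission G u : ℝ) + 2 * (graphDiam G : ℝ) := by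
    have hnat : graphDiam G * (graphDiam G + 1) + 2 * (n - 1)
        ≤ 2 * transmission G u + 2 * graphDiam G := by omega
    have := (Nat.cast_le (α := ℝ)).mpr hnat
    push_cast at this
    rw [hcast] at this
    linarith
  have hdR : (graphDiam G : ℝ) ≤ (n : ℝ) - 1 := by
    have := (Nat.cast_le (α := ℝ)).mpr hdle
    linarith [hcast ▸ this]
  have hRge : (transmission G u : ℝ) / ((n : ℝ) - 1) ≤ remoteness G := by
    unfold remoteness
    rw [← hSdef]
    gcongr
    · exact le_csSup hbdd (hmem u)
  -- Part 1 : inequality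
  have part1 : (graphDiam G : ℝ) - remoteness G ≤ ((n : ℝ) - 2) / 2 := by
    have h1 : ((graphDiam G : ℝ) - ((n : ℝ) - 2) / 2) * ((n : ℝ) - 1)
        ≤ (transmission G u : ℝ) := by
      nlinarith [sq_nonneg ((n : ℝ) - 1 - (graphDiam G : ℝ))]
    have h2 : (graphDiam G : ℝ) - ((n : ℝ) - 2) / 2
        ≤ (transmission G u : ℝ) / ((n : ℝ) - 1) :=
      (le_div_iff₀ hm0).mpr h1
    linarith
  refine ⟨part1, ?_, ?_⟩
  · -- equality → path
    intro heq
    have hdeq : graphDiam G = n - 1 := by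
      by_contra hne
      have hdlt : (graphDiam G : ℝ) ≤ (n : ℝ) - 2 := by
        have hstep : graphDiam G + 1 ≤ n - 1 := by omega
        have h' := (Nat.cast_le (α := ℝ)).mpr hstep
        push_cast at h'
        linarith [hcast ▸ h']
      have h1 : (graphDiam G : ℝ) - (transmission G u : ℝ) / ((n : ℝ) - 1)
          ≥ ((n : ℝ) - 2) / 2 := by
        linarith
      have h2 : ((graphDiam G : ℝ) - ((n : ℝ) - 2) / 2) * ((n : ℝ) - 1)
          ≥ (transmission G u : ℝ) := by
        have := (div_le_iff₀ hm0).mp (by linarith :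
          (transmission G u : ℝ) / ((n : ℝ) - 1) ≤ (graphDiam G : ℝ) - ((n : ℝ) - 2) / 2)
        linarith
      nlinarith [sq_nonneg ((n : ℝ) - 1 - (graphDiam G : ℝ))]
    exact iso_of_dist hG hn (by rw [← hdv, hdeq])
  · -- path → equality
    rintro ⟨e⟩
    have hde : ∀ a b : Fin n, G.dist a b = (SimpleGraph.pathGraph n).dist (e a) (e b) :=
      fun a b => (iso_dist_eq e hG a b).symm
    set z : Fin n := ⟨0, hn0⟩ with hz
    set l : Fin n := ⟨n - 1, by omega⟩ with hl
    have hDge : (n - 1 : ℕ) ≤ graphDiam G := by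
      have hmemp : ((e.symm z, e.symm l) : Fin n × Fin n)
          ∈ (Finset.univ : Finset (Fin n × Fin n)) := Finset.mem_univ _
      have hle := Finset.le_sup (f := fun p : Fin n × Fin n => G.dist p.1 p.2) hmemp
      have hval : G.dist (e.symm z) (e.symm l) = n - 1 := by
        rw [hde, RelIso.apply_symm_apply, RelIso.apply_symm_apply, pg_dist_eq hn1]
        simp [hz, hl]
      have h2 : G.dist (e.symm z) (e.symm l) ≤ graphDiam G := hle
      omega
    have hRle : remoteness G ≤ (n : ℝ) / 2 := by
      have hsup : sSup S ≤ (n : ℝ) * ((n : ℝ) - 1) / 2 := by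
        apply csSup_le hSne
        rintro x ⟨w, rfl⟩
        have hsum : transmission G w
            = ∑ w' : Fin n, (SimpleGraph.pathGraph n).dist (e w) w' := by
          rw [transmission]
          rw [show (∑ b, G.dist w b) = ∑ b, (SimpleGraph.pathGraph n).dist (e w) (e b) from
            Finset.sum_congr rfl fun b _ => hde w b]
          exact Equiv.sum_comp e.toEquiv (fun w' => (SimpleGraph.pathGraph n).dist (e w) w')
        have h2t := pg_trans_le hn1 (e w)
        rw [← hsum] at h2t
        have := (Nat.cast_le (α := ℝ)).mpr h2t
        push_cast at this
        rw [hcast] at this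
        linarith
      unfold remoteness
      rw [← hSdef, div_le_iff₀ hm0]
      calc sSup S ≤ (n : ℝ) * ((n : ℝ) - 1) / 2 := hsup
        _ = (n : ℝ) / 2 * ((n : ℝ) - 1) := by ring
    have hDgeR : ((n : ℝ) - 1) ≤ (graphDiam G : ℝ) := by
      have := (Nat.cast_le (α := ℝ)).mpr hDge
      linarith [hcast ▸ this]
    linarith [part1]
end

section
/- For every connected graph G on n ≥ 2 vertices with vertex connectivity ν and remoteness ρ, the product satisfies ν·ρ ≤ n-1, with equality if and only if G is the complete graph K_n. -/
/-!
Fix a vertex `v`, put `N = n - 1`, and let `m j` be the number of vertices at distance more than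
`j` from `v`, so that `t(v) = ∑_{j < e} m j` for the eccentricity `e` of `v`. For `i ≥ 1` the
sphere of radius `i` around `v` separates `v` from every vertex beyond it, so it has at least `ν`
vertices; hence `m j ≤ N - jν` for `j < e`, and in particular `x = (e - 1)ν < N`. Summing,
`2ν t(v) ≤ (x + ν)(2N - x)`, which is below `2N²` as soon as `ν < N`. That holds whenever `G` is
not complete: a vertex with a non-neighbour is separated from it by its unit sphere. In `K_n` both
`ν` and every `t(v)` equal `N`.
-/

open SimpleGraph Finset

/-- The vertex connectivity: the minimum number of vertices whose removal disconnects the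
graph or reduces it to a single vertex. -/
noncomputable def vertexConnectivity {n : ℕ} (G : SimpleGraph (Fin n)) : ℕ :=
  sInf {k | ∃ S : Finset (Fin n),
    S.card = k ∧ (¬ (G.induce ((↑S : Set (Fin n))ᶜ)).Connected ∨ n - S.card = 1)}

theorem Nat.mul_sum_lt_sq_of_add_mul_le {a : ℕ → ℕ} {N ν e : ℕ} (hν : ν < N)
    (ha : ∀ j < e, 0 < a j ∧ a j + j * ν ≤ N) : ν * ∑ j ∈ range e, a j < N ^ 2 := by
  obtain _ | k := e
  · simpa using pow_pos (zero_lt_of_lt hν) 2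
  have hk : k * ν < N := by have := ha k k.lt_succ_self; omega
  have hsum : ∑ j ∈ range (k + 1), (a j : ℤ) ≤ ∑ j ∈ range (k + 1), ((N : ℤ) - j * ν) :=
    sum_le_sum fun j hj => by have := (ha j (mem_range.1 hj)).2; zify at this; linarith
  have hid : (∑ j ∈ range (k + 1), (j : ℤ)) * 2 = (k + 1) * k := by
    have h := sum_range_id_mul_two (k + 1)
    rw [Nat.add_sub_cancel] at h
    rw [← Nat.cast_sum]
    exact_mod_cast h
  have hgauss : (∑ j ∈ range (k + 1), ((N : ℤ) - j * ν)) * 2 = (k + 1) * (2 * N - k * ν) := by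
    rw [sum_sub_distrib, sum_const, card_range, nsmul_eq_mul, ← sum_mul]
    push_cast
    linear_combination (-(ν : ℤ)) * hid
  zify at hν hk ⊢
  have hν0 : (0 : ℤ) ≤ ν := by positivity
  have hbound := mul_le_mul_of_nonneg_left hsum hν0
  rcases k.eq_zero_or_pos with rfl | hk0
  · push_cast at hgauss
    nlinarith
  · -- with `x = kν`: `(x + ν)(2N - x) ≤ 2x(2N - x) = 2N² - 2(N - x)²`
    have hνx : (ν : ℤ) ≤ k * ν := le_mul_of_one_le_left hν0 (by exact_mod_cast hk0)
    nlinarith [mul_nonneg (sub_nonneg.2 hνx) (by linarith : (0 : ℤ) ≤ 2 * N - k * ν)]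

theorem Finset.sum_eq_sum_range_card_lt {V : Type*} [Fintype V] {f : V → ℕ} {e : ℕ}
    (hf : ∀ u, f u ≤ e) :
    ∑ u, f u = ∑ j ∈ range e, #{u | j < f u} := by
  have hcount (u : V) : f u = ∑ j ∈ range e, if j < f u then 1 else 0 := by
    have hfilter : {j ∈ range e | j < f u} = range (f u) := by
      ext j; simp only [mem_filter, mem_range]; have := hf u; omega
    rw [sum_boole, Nat.cast_id, hfilter, card_range]
  simp_rw [card_filter]
  rw [sum_comm]
  exact sum_congr rfl fun u _ => hcount u

theorem Finset.card_lt_eq_card_eq_succ_add_card_succ_lt {V : Type*} [Fintype V] (f : V → ℕ)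
    (j : ℕ) : #{u | j < f u} = #{u | f u = j + 1} + #{u | j + 1 < f u} := by
  classical
  rw [← card_union_of_disjoint (disjoint_filter.2 fun _ _ h1 h2 => by omega), ← filter_or]
  exact congrArg card (filter_congr fun u _ => by omega)

namespace SimpleGraph

variable {V : Type*} {G : SimpleGraph V}

theorem Connected.not_connected_induce_compl_dist_eq (hG : G.Connected) {v u : V} {i : ℕ}
    (hi : 0 < i) (hu : i < G.dist v u) : ¬ (G.induce {w | G.dist v w = i}ᶜ).Connected := by
  intro hc
  obtain ⟨p⟩ := hc.preconnected ⟨v, by simpa using hi.ne⟩ ⟨u, hu.ne'⟩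
  obtain ⟨d, -, hd_near, hd_far⟩ :=
    p.exists_boundary_dart {w | G.dist v w < i} (by simpa using hi) hu.le.not_gt
  have hadj : G.Adj d.fst d.snd := d.adj
  have hstep : G.dist v d.snd ≤ G.dist v d.fst + 1 := by
    simpa [dist_eq_one_iff_adj.mpr hadj] using
      hG.dist_triangle (u := v) (v := d.fst.1) (w := d.snd.1)
  have hd_off : G.dist v d.snd ≠ i := d.snd.2
  simp only [Set.mem_ofPred_eq] at hd_near hd_far
  omega

variable [Fintype V]

theorem Connected.card_dist_pos (hG : G.Connected) (v : V) :
    #{u | 0 < G.dist v u} = Fintype.card V - 1 := by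
  classical
  rw [show ({u | 0 < G.dist v u} : Finset V) = univ.erase v by
    ext u; simp [pos_iff_ne_zero, hG.dist_eq_zero_iff, eq_comm], card_erase_of_mem (mem_univ v),
    card_univ]

end SimpleGraph

section

variable {n : ℕ} {G : SimpleGraph (Fin n)}

theorem vertexConnectivity_le_card {S : Finset (Fin n)}
    (h : ¬ (G.induce (↑S : Set (Fin n))ᶜ).Connected) : vertexConnectivity G ≤ #S :=
  Nat.sInf_le ⟨S, rfl, .inl h⟩

theorem vertexConnectivity_add_card_dist_gt_le (hG : G.Connected) {v : Fin n} {j : ℕ}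
    (h : 0 < #{u | j + 1 < G.dist v u}) :
    vertexConnectivity G + #{u | j + 1 < G.dist v u} ≤ #{u | j < G.dist v u} := by
  obtain ⟨u, hu⟩ := card_pos.mp h
  have hsphere : vertexConnectivity G ≤ #{u | G.dist v u = j + 1} := by
    apply vertexConnectivity_le_card
    rw [coe_filter_univ]
    exact hG.not_connected_induce_compl_dist_eq j.succ_pos (by simpa using hu)
  rw [card_lt_eq_card_eq_succ_add_card_succ_lt (G.dist v) j]
  omega

theorem card_dist_gt_add_mul_le (hG : G.Connected) {v : Fin n} :
    ∀ {j : ℕ}, 0 < #{u | j < G.dist v u} →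
      #{u | j < G.dist v u} + j * vertexConnectivity G ≤ n - 1
  | 0, _ => by simp [hG.card_dist_pos]
  | j + 1, h => by
    have := vertexConnectivity_add_card_dist_gt_le hG h
    have := card_dist_gt_add_mul_le hG (v := v) (j := j) (by omega)
    linarith

theorem vertexConnectivity_lt_of_ne_top (hG : G.Connected) (hne : G ≠ ⊤) :
    vertexConnectivity G < n - 1 := by
  obtain ⟨u, w, huw, hnadj⟩ := ne_top_iff_exists_not_adj.1 hne
  have hfar : 1 < G.dist u w := by
    have := hG.pos_dist_of_ne huw
    have : G.dist u w ≠ 1 := by simpa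
    omega
  have hpos : 0 < #{x | 1 < G.dist u x} := card_pos.2 ⟨w, by simpa⟩
  have := vertexConnectivity_add_card_dist_gt_le hG (j := 0) hpos
  rw [Nat.zero_add, hG.card_dist_pos, Fintype.card_fin] at this
  omega

theorem vertexConnectivity_top [Nonempty (Fin n)] :
    vertexConnectivity (⊤ : SimpleGraph (Fin n)) = n - 1 := by
  obtain ⟨v⟩ := ‹Nonempty (Fin n)›
  have hn : 0 < n := Fin.pos_iff_nonempty.2 ⟨v⟩
  have hcard : #(univ.erase v) = n - 1 := by simp
  refine le_antisymm (Nat.sInf_le ⟨univ.erase v, hcard, .inr (by omega)⟩)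
    (le_csInf ⟨_, univ.erase v, hcard, .inr (by omega)⟩ ?_)
  rintro k ⟨S, rfl, hS⟩
  by_contra! hlt
  have hcompl : 1 < #Sᶜ := by rw [card_compl, Fintype.card_fin]; omega
  rcases hS with hS | hS
  · obtain ⟨x, hx⟩ := card_pos.1 (by omega : 0 < #Sᶜ)
    have : Nonempty ((↑S : Set (Fin n))ᶜ : Set (Fin n)) := ⟨⟨x, by simpa using hx⟩⟩
    exact hS (by rw [induce_top]; exact connected_top)
  · omega

theorem transmission_top (v : Fin n) : transmission ⊤ v = n - 1 := by
  have : Nonempty (Fin n) := ⟨v⟩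
  have hle (u : Fin n) : (⊤ : SimpleGraph (Fin n)).dist v u ≤ 1 := by
    rw [dist_top]; split <;> omega
  rw [transmission, sum_eq_sum_range_card_lt hle, sum_range_one, connected_top.card_dist_pos,
    Fintype.card_fin]

theorem exists_remoteness_eq_transmission [Nonempty (Fin n)] (G : SimpleGraph (Fin n)) :
    ∃ v, remoteness G = transmission G v / (n - 1) := by
  obtain ⟨v⟩ := ‹Nonempty (Fin n)›
  have hne : {x : ℝ | ∃ v, x = transmission G v}.Nonempty := ⟨_, v, rfl⟩
  have hfin : {x : ℝ | ∃ v, x = transmission G v}.Finite :=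
    (Set.finite_range fun v => (transmission G v : ℝ)).subset
      (by rintro x ⟨v, rfl⟩; exact ⟨v, rfl⟩)
  obtain ⟨w, hw⟩ := hne.csSup_mem hfin
  exact ⟨w, by rw [remoteness, hw]⟩

theorem vertexConnectivity_mul_transmission_lt (hG : G.Connected) (hne : G ≠ ⊤) (v : Fin n) :
    vertexConnectivity G * transmission G v < (n - 1) ^ 2 := by
  have := hG.nonempty
  obtain ⟨u, -, hu⟩ := exists_mem_eq_sup univ univ_nonempty (G.dist v)
  rw [transmission, sum_eq_sum_range_card_lt fun w => le_sup (f := G.dist v) (mem_univ w)]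
  refine Nat.mul_sum_lt_sq_of_add_mul_le (vertexConnectivity_lt_of_ne_top hG hne) fun j hj => ?_
  have hpos : 0 < #{w | j < G.dist v w} := card_pos.2 ⟨u, by simpa [← hu] using hj⟩
  exact ⟨hpos, card_dist_gt_add_mul_le hG hpos⟩

end

theorem connectivity_mul_remoteness_general {n : ℕ} (G : SimpleGraph (Fin n))
    (hG : G.Connected) :
    (vertexConnectivity G : ℝ) * remoteness G ≤ n - 1 ∧
      ((vertexConnectivity G : ℝ) * remoteness G = n - 1 ↔ G = ⊤) := by
  have := hG.nonempty
  have hn : 0 < n := Fin.pos_iff_nonempty.2 this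
  obtain ⟨v, hv⟩ := exists_remoteness_eq_transmission G
  by_cases htop : G = ⊤
  · have heq : (vertexConnectivity G : ℝ) * remoteness G = n - 1 := by
      rw [hv, htop, transmission_top, vertexConnectivity_top, Nat.cast_pred hn, ← mul_div_assoc,
        mul_self_div_self]
    exact ⟨heq.le, iff_of_true heq htop⟩
  · have hlt : (vertexConnectivity G : ℝ) * remoteness G < n - 1 := by
      have hkey := vertexConnectivity_mul_transmission_lt hG htop v
      have hN : 0 < n - 1 := Nat.pos_of_ne_zero fun h => by simp [h] at hkey
      rw [hv, ← mul_div_assoc, ← Nat.cast_pred hn, div_lt_iff₀ (by exact_mod_cast hN), ← sq]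
      exact_mod_cast hkey
    exact ⟨hlt.le, iff_of_false hlt.ne htop⟩

theorem connectivity_mul_remoteness {n : ℕ} (hn : 2 ≤ n) (G : SimpleGraph (Fin n))
    (hG : G.Connected) :
    (vertexConnectivity G : ℝ) * remoteness G ≤ n - 1 ∧
      ((vertexConnectivity G : ℝ) * remoteness G = n - 1 ↔ G = ⊤) :=
  connectivity_mul_remoteness_general G hG
end
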